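/- arXiv:2012.04174 — 2 statements merged into one kernel-verified Lean document; each statement's English description precedes it below -/
import Mathlib

section
/- For the 3D spherical helix array with unit climb rate, the azimuth Fisher-information term satisfies B_helix(θ, φ) = (π³r²/λ²)·sin²θ·(cos(2φ) + 2), obtained as ∫₀^{2π} (4π²r²/λ²)·(sinθ · sin τ · sin(φ − τ))² dτ = (π³r²/λ²)·sin²θ·(cos 2φ + 2). -/
/-! The product-to-sum formula gives `sin τ · sin (φ - τ) = (cos (2τ - φ) - cos φ) / 2`, so the
square of it is a constant plus harmonics `cos (2τ - φ)` and `cos (4τ - 2φ)`. The harmonics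
integrate to zero over a full period, leaving `2π · (1/8 + cos² φ / 4) = π/4 · (cos 2φ + 2)`. -/

open Real

theorem integral_cos_int_mul_sub_eq_zero {n : ℤ} (hn : n ≠ 0) (c : ℝ) :
    ∫ τ in (0:ℝ)..(2 * π), cos (n * τ - c) = 0 := by
  have hn' : (n : ℝ) ≠ 0 := Int.cast_ne_zero.mpr hn
  rw [intervalIntegral.integral_comp_mul_sub _ hn', integral_cos, sub_eq_neg_add (n * (2 * π)),
    sin_add_int_mul_two_pi]
  simp

theorem sin_mul_sin_sub_sq (φ τ : ℝ) :
    (sin τ * sin (φ - τ)) ^ 2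
      = (1 / 8 + cos φ ^ 2 / 4) - cos φ / 2 * cos (2 * τ - φ) + 1 / 8 * cos (4 * τ - 2 * φ) := by
  have h4 : 4 * τ - 2 * φ = 2 * (2 * τ - φ) := by ring
  rw [h4, cos_two_mul, cos_sub, sin_sub, cos_two_mul, sin_two_mul]
  linear_combination
    (cos φ ^ 2 * (sin τ ^ 2 - cos τ ^ 2 + 1) - 2 * sin τ * cos τ * sin φ * cos φ) * sin_sq_add_cos_sq τ

theorem integral_sin_mul_sin_sub_sq (φ : ℝ) :
    ∫ τ in (0:ℝ)..(2 * π), (sin τ * sin (φ - τ)) ^ 2 = π / 4 * (cos (2 * φ) + 2) := by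
  have h2 : ∫ τ in (0:ℝ)..(2 * π), cos (2 * τ - φ) = 0 := by
    exact_mod_cast integral_cos_int_mul_sub_eq_zero (n := 2) two_ne_zero φ
  have h4 : ∫ τ in (0:ℝ)..(2 * π), cos (4 * τ - 2 * φ) = 0 := by
    exact_mod_cast integral_cos_int_mul_sub_eq_zero (n := 4) four_ne_zero (2 * φ)
  simp_rw [sin_mul_sin_sub_sq]
  rw [intervalIntegral.integral_add, intervalIntegral.integral_sub, intervalIntegral.integral_const,
    intervalIntegral.integral_const_mul, intervalIntegral.integral_const_mul, h2, h4, cos_two_mul]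
  · simp only [sub_zero, smul_eq_mul, mul_zero, add_zero]
    ring
  all_goals exact Continuous.intervalIntegrable (by fun_prop) _ _

theorem helix_azimuth_fisher_term_general (r lam θ φ : ℝ) :
    (∫ τ in (0:ℝ)..(2 * π),
        (4 * π ^ 2 * r ^ 2 / lam ^ 2) * (sin θ * sin τ * sin (φ - τ)) ^ 2)
      = (π ^ 3 * r ^ 2 / lam ^ 2) * (sin θ) ^ 2 * (cos (2 * φ) + 2) := by
  simp_rw [mul_assoc (sin θ), mul_pow (sin θ), ← mul_assoc]
  rw [intervalIntegral.integral_const_mul, integral_sin_mul_sin_sub_sq]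
  ring

theorem helix_azimuth_fisher_term (r lam θ φ : ℝ) (hr : 0 < r) (hlam : 0 < lam) :
    (∫ τ in (0:ℝ)..(2 * π),
        (4 * π ^ 2 * r ^ 2 / lam ^ 2) * (sin θ * sin τ * sin (φ - τ)) ^ 2)
      = (π ^ 3 * r ^ 2 / lam ^ 2) * (sin θ) ^ 2 * (cos (2 * φ) + 2) :=
  helix_azimuth_fisher_term_general r lam θ φ
end

section
/- Determinant positivity for the helix FIM off the poles: with A, B, C the spherical-helix Fisher-information terms A = −(π²r²/λ²)(cos²θ·cos 2φ + cos 2θ − 3), B = (π³r²/λ²)·sin²θ·(cos 2φ + 2), C = (2π³r²/λ²)·sinθ cosθ sinφ cosφ, the determinant A·B − C² is strictly positive for all θ ∈ (0, π) and all φ, r, λ > 0. Hence the 2×2 Fisher Information Matrix of the spherical helix is positive definite and the CRB is finite in both θ and φ whenever the source is not at a pole. -/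
open Real

lemma helixE_pos (t x : ℝ) (ht0 : 0 ≤ t) (ht1 : t ≤ 1) (hx1 : -1 ≤ x) (hx2 : x ≤ 1) :
    0 < (4 - t * (x + 2)) * (x + 2) - π * t * (1 - x ^ 2) := by
  nlinarith [Real.pi_gt_three, Real.pi_lt_d2, sq_nonneg x,
    mul_nonneg (sub_nonneg.2 ht1) (sq_nonneg (x + 2)),
    mul_nonneg (mul_nonneg (sub_nonneg.2 ht1) (by linarith : (0:ℝ) ≤ 1 + x))
      (by linarith : (0:ℝ) ≤ 1 - x),
    mul_nonneg (mul_nonneg (by nlinarith [Real.pi_gt_three] : (0:ℝ) ≤ π - 1)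
      (sub_nonneg.2 ht1)) (mul_nonneg (by linarith : (0:ℝ) ≤ 1 + x) (by linarith : (0:ℝ) ≤ 1 - x))]

theorem helix_fim_positive_definite (r lam θ φ : ℝ)
    (hr : 0 < r) (hlam : 0 < lam) (hθ : θ ∈ Set.Ioo 0 π) :
    0 < -(π ^ 2 * r ^ 2 / lam ^ 2) * ((cos θ) ^ 2 * cos (2 * φ) + cos (2 * θ) - 3) ∧
    0 < (-(π ^ 2 * r ^ 2 / lam ^ 2) * ((cos θ) ^ 2 * cos (2 * φ) + cos (2 * θ) - 3)) *
          ((π ^ 3 * r ^ 2 / lam ^ 2) * (sin θ) ^ 2 * (cos (2 * φ) + 2)) -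
        ((2 * π ^ 3 * r ^ 2 / lam ^ 2) * sin θ * cos θ * sin φ * cos φ) ^ 2 := by
  obtain ⟨h0, hπθ⟩ := hθ
  have hs : 0 < sin θ := Real.sin_pos_of_pos_of_lt_pi h0 hπθ
  have hc2 : cos θ ^ 2 ≤ 1 := cos_sq_le_one θ
  have hcos2θ : cos (2 * θ) = 2 * cos θ ^ 2 - 1 := Real.cos_two_mul θ
  have hx1 : -1 ≤ cos (2 * φ) := Real.neg_one_le_cos _
  have hx2 : cos (2 * φ) ≤ 1 := Real.cos_le_one _
  have hK : 0 < π ^ 2 * r ^ 2 / lam ^ 2 := by positivity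
  constructor
  · have hX : cos θ ^ 2 * cos (2 * φ) + cos (2 * θ) - 3 < 0 := by
      nlinarith [sq_nonneg (cos θ)]
    nlinarith [mul_pos hK (neg_pos.2 hX)]
  · have hE := helixE_pos (cos θ ^ 2) (cos (2 * φ)) (sq_nonneg _) hc2 hx1 hx2
    have h2φ : (2 * sin φ * cos φ) ^ 2 = 1 - cos (2 * φ) ^ 2 := by
      rw [show 2 * sin φ * cos φ = sin (2 * φ) from (Real.sin_two_mul φ).symm]
      have := Real.sin_sq_add_cos_sq (2 * φ)
      linarith
    have hP : 0 < π ^ 5 * r ^ 4 / lam ^ 4 * sin θ ^ 2 := by positivity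
    have key : (-(π ^ 2 * r ^ 2 / lam ^ 2) * ((cos θ) ^ 2 * cos (2 * φ) + cos (2 * θ) - 3)) *
          ((π ^ 3 * r ^ 2 / lam ^ 2) * (sin θ) ^ 2 * (cos (2 * φ) + 2)) -
        ((2 * π ^ 3 * r ^ 2 / lam ^ 2) * sin θ * cos θ * sin φ * cos φ) ^ 2 =
        (π ^ 5 * r ^ 4 / lam ^ 4 * sin θ ^ 2) *
          ((4 - cos θ ^ 2 * (cos (2 * φ) + 2)) * (cos (2 * φ) + 2) -
            π * (cos θ ^ 2) * (1 - cos (2 * φ) ^ 2)) := by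
      rw [hcos2θ]
      linear_combination (-(π ^ 6 * r ^ 4 / lam ^ 4 * sin θ ^ 2 * cos θ ^ 2)) * h2φ
    rw [key]
    exact mul_pos hP hE
end
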